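/- arXiv:math/0512244 — 4 statements merged into one kernel-verified Lean document; each statement's English description precedes it below -/
import Mathlib

section
/- Let (Q,+) be a diassociative loop and let f, g, h be central endomorphisms of (Q,+). Then: (1) f + g is a central endomorphism of (Q,+); (2) f + (g + h) = (f + g) + h and f + g = g + f; (3) the zero endomorphism of (Q,+) is central; (4) -f is a central endomorphism of (Q,+); (5) f + (-f) = 0 and f + 0 = f; (6) the composition f∘g is a central endomorphism of (Q,+). -/
/- Preamble: diassociative loops, written additively.
   A loop is a set with `+`, a neutral element `0`, and unique left/right
   solvability.  Diassociativity is stated as: the subloop generated by any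
   two elements (closure under `+`, negation and both divisions) is
   associative; in particular every element has a two-sided inverse `-x`
   (included as part of the structure, as it is uniquely determined). -/

universe u

section Preamble
variable {Q : Type u}

/-- Membership in the subloop of `Q` generated by the pair `a, b`
    (closure under `0`, negation, addition and both divisions). -/
inductive GenBy [Add Q] [Zero Q] [Neg Q] (a b : Q) : Q → Prop
  | base_left : GenBy a b a
  | base_right : GenBy a b b
  | zero : GenBy a b 0
  | neg : ∀ x, GenBy a b x → GenBy a b (-x)
  | add : ∀ x y, GenBy a b x → GenBy a b y → GenBy a b (x + y)
  | ldiv : ∀ x y z, GenBy a b x → GenBy a b y → x + z = y → GenBy a b z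
  | rdiv : ∀ x y z, GenBy a b x → GenBy a b y → z + x = y → GenBy a b z

/-- A diassociative loop `(Q,+)`: a loop in which the subloop generated by
    any pair of elements is a group (stated as associativity on that
    subloop); every element has a two-sided inverse `-x`. -/
class DiassocLoop (Q : Type u) extends Add Q, Zero Q, Neg Q where
  zero_add : ∀ x : Q, 0 + x = x
  add_zero : ∀ x : Q, x + 0 = x
  exu_left : ∀ a b : Q, ∃! x : Q, a + x = b
  exu_right : ∀ a b : Q, ∃! y : Q, y + a = b
  neg_add_cancel : ∀ x : Q, -x + x = 0
  add_neg_cancel : ∀ x : Q, x + -x = 0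
  diassoc : ∀ a b x y z : Q, GenBy a b x → GenBy a b y → GenBy a b z →
      (x + y) + z = x + (y + z)

variable [Add Q] [Zero Q] [Neg Q]

/-- Natural multiple `n • x = x + (x + (⋯ + 0))`. -/
def nsmulL : ℕ → Q → Q
  | 0, _ => 0
  | n + 1, x => x + nsmulL n x

/-- Integer multiple `m • x` (unambiguous by diassociativity). -/
def zsmulL : ℤ → Q → Q
  | Int.ofNat n, x => nsmulL n x
  | Int.negSucc n, x => -(nsmulL (n + 1) x)

/-- `a` belongs to the nucleus `N(Q,+)`. -/
def inNucleus (a : Q) : Prop :=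
  ∀ x y : Q, (a + x) + y = a + (x + y) ∧ (x + a) + y = x + (a + y) ∧
    (x + y) + a = x + (y + a)

/-- `a` belongs to the Moufang center `K(Q,+)`. -/
def inMoufangCenter (a : Q) : Prop :=
  ∀ x y : Q, (a + a) + (x + y) = (a + x) + (a + y)

/-- `a` belongs to the center `Z(Q,+) = N(Q,+) ∩ K(Q,+)`. -/
def inCenter (a : Q) : Prop := inNucleus a ∧ inMoufangCenter a

/-- `f` is an endomorphism of `(Q,+)`. -/
def IsEndo (f : Q → Q) : Prop := ∀ x y : Q, f (x + y) = f x + f y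

/-- `f` is a central endomorphism of `(Q,+)`: an endomorphism with
    `f(Q) ⊆ Z(Q,+)`. -/
def IsCentralEndo (f : Q → Q) : Prop := IsEndo f ∧ ∀ x : Q, inCenter (f x)

/-- `f` is an `m`-quasicentral endomorphism of `(Q,+)`:
    `m•x + f(x) ∈ Z(Q,+)` for all `x`. -/
def IsQuasicentral (m : ℤ) (f : Q → Q) : Prop :=
  IsEndo f ∧ ∀ x : Q, inCenter (zsmulL m x + f x)

end Preamble


/-!
The central elements of a loop with two-sided inverses form an abelian group contained in the
nucleus, and central endomorphisms are exactly the endomorphisms taking values in it. So the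
pointwise operations on central endomorphisms behave like those on homomorphisms into an
abelian group: each identity between them is an identity in that group, evaluated pointwise.
-/

section Nucleus
variable {Q : Type u} [Add Q] {a b : Q}

theorem inMoufangCenter_of_inNucleus_of_commute (ha : inNucleus a) (hcomm : ∀ x, a + x = x + a) :
    inMoufangCenter a := fun x y =>
  calc (a + a) + (x + y) = a + (a + (x + y)) := (ha a (x + y)).1
    _ = a + ((a + x) + y) := by rw [(ha x y).1]
    _ = (a + (a + x)) + y := ((ha (a + x) y).1).symm
    _ = ((a + x) + a) + y := by rw [hcomm (a + x)]
    _ = (a + x) + (a + y) := (ha (a + x) y).2.1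

theorem inNucleus.add (ha : inNucleus a) (hb : inNucleus b) : inNucleus (a + b) := by
  intro x y
  refine ⟨?_, ?_, ?_⟩
  · calc ((a + b) + x) + y = (a + (b + x)) + y := by rw [(ha b x).1]
      _ = a + ((b + x) + y) := (ha (b + x) y).1
      _ = a + (b + (x + y)) := by rw [(hb x y).1]
      _ = (a + b) + (x + y) := ((ha b (x + y)).1).symm
  · calc (x + (a + b)) + y = ((x + a) + b) + y := by rw [(ha x b).2.1]
      _ = (x + a) + (b + y) := (hb (x + a) y).2.1
      _ = x + (a + (b + y)) := (ha x (b + y)).2.1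
      _ = x + ((a + b) + y) := by rw [(ha b y).1]
  · calc (x + y) + (a + b) = ((x + y) + a) + b := ((ha (x + y) b).2.1).symm
      _ = (x + (y + a)) + b := by rw [(ha x y).2.2]
      _ = x + ((y + a) + b) := (hb x (y + a)).2.2
      _ = x + (y + (a + b)) := by rw [(ha y b).2.1]

end Nucleus

namespace DiassocLoop
variable {Q : Type u} [DiassocLoop Q]

theorem add_left_cancel {a x y : Q} (h : a + x = a + y) : x = y :=
  (exu_left a (a + y)).unique h rfl

theorem add_right_cancel {a x y : Q} (h : x + a = y + a) : x = y :=
  (exu_right a (y + a)).unique h rfl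

theorem neg_eq_of_add_eq_zero {a b : Q} (h : a + b = 0) : -a = b :=
  (exu_left a 0).unique (add_neg_cancel a) h

end DiassocLoop

section Center
variable {Q : Type u} [DiassocLoop Q] {a b : Q}

theorem inCenter.add_comm (ha : inCenter a) (x : Q) : a + x = x + a := by
  have h := ha.2 x 0
  rw [DiassocLoop.add_zero, DiassocLoop.add_zero] at h
  exact DiassocLoop.add_left_cancel (((ha.1 a x).1.symm.trans h).trans (ha.1 a x).2.2)

theorem inCenter_iff : inCenter a ↔ inNucleus a ∧ ∀ x, a + x = x + a :=
  ⟨fun ha => ⟨ha.1, ha.add_comm⟩,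
    fun ⟨ha, hcomm⟩ => ⟨ha, inMoufangCenter_of_inNucleus_of_commute ha hcomm⟩⟩

theorem inCenter_zero : inCenter (0 : Q) :=
  inCenter_iff.2 ⟨fun x y => by simp only [DiassocLoop.zero_add, DiassocLoop.add_zero, and_self],
    fun x => by rw [DiassocLoop.zero_add, DiassocLoop.add_zero]⟩

theorem inNucleus.neg (ha : inNucleus a) : inNucleus (-a) := by
  have cancel_right : ∀ x, (x + -a) + a = x := fun x => by
    rw [(ha x (-a)).2.2, DiassocLoop.neg_add_cancel, DiassocLoop.add_zero]
  have cancel_left : ∀ x, a + (-a + x) = x := fun x => by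
    rw [← (ha (-a) x).1, DiassocLoop.add_neg_cancel, DiassocLoop.zero_add]
  intro x y
  refine ⟨DiassocLoop.add_left_cancel (a := a) ?_, ?_, DiassocLoop.add_right_cancel (a := a) ?_⟩
  · rw [← (ha (-a + x) y).1, cancel_left, cancel_left]
  · -- expand `y` to `a + (-a + y)` and move `a` across, using that `a` is in the middle nucleus
    calc (x + -a) + y = (x + -a) + (a + (-a + y)) := by rw [cancel_left]
      _ = ((x + -a) + a) + (-a + y) := ((ha (x + -a) (-a + y)).2.1).symm
      _ = x + (-a + y) := by rw [cancel_right]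
  · rw [cancel_right, (ha x (y + -a)).2.2, cancel_right]

theorem inCenter.neg (ha : inCenter a) : inCenter (-a) := by
  refine inCenter_iff.2 ⟨ha.1.neg, fun x => DiassocLoop.add_left_cancel (a := a) ?_⟩
  rw [← (ha.1 (-a) x).1, DiassocLoop.add_neg_cancel, DiassocLoop.zero_add, ← (ha.1 x (-a)).1,
    ha.add_comm x, (ha.1 x (-a)).2.1, DiassocLoop.add_neg_cancel, DiassocLoop.add_zero]

theorem inCenter.add (ha : inCenter a) (hb : inCenter b) : inCenter (a + b) :=
  inCenter_iff.2 ⟨ha.1.add hb.1, fun x =>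
    calc (a + b) + x = a + (x + b) := by rw [(ha.1 b x).1, hb.add_comm x]
      _ = (x + a) + b := by rw [← (ha.1 x b).1, ha.add_comm x]
      _ = x + (a + b) := (ha.1 x b).2.1⟩

theorem add_add_add_comm_of_inCenter {c : Q} (ha : inNucleus a) (hb : inCenter b)
    (hc : inNucleus c) (d : Q) : (a + b) + (c + d) = (a + c) + (b + d) := by
  rw [(ha b (c + d)).1, ← (hb.1 c d).1, hb.add_comm c, (hc b d).1, ← (ha c (b + d)).1]

theorem neg_add_of_inCenter (ha : inCenter a) (hb : inCenter b) : -(a + b) = -a + -b := by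
  refine DiassocLoop.neg_eq_of_add_eq_zero ?_
  rw [add_add_add_comm_of_inCenter ha.1 hb ha.neg.1, DiassocLoop.add_neg_cancel,
    DiassocLoop.add_neg_cancel, DiassocLoop.add_zero]

end Center

section CentralEndo
variable {Q : Type u} [DiassocLoop Q] {f g : Q → Q}

theorem IsCentralEndo.add (hf : IsCentralEndo f) (hg : IsCentralEndo g) :
    IsCentralEndo (fun x => f x + g x) :=
  ⟨fun x y => by
      simp only [hf.1 x y, hg.1 x y]
      exact add_add_add_comm_of_inCenter (hf.2 x).1 (hf.2 y) (hg.2 x).1 _,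
    fun x => (hf.2 x).add (hg.2 x)⟩

theorem isCentralEndo_zero : IsCentralEndo (fun _ : Q => (0 : Q)) :=
  ⟨fun _ _ => (DiassocLoop.zero_add 0).symm, fun _ => inCenter_zero⟩

theorem IsCentralEndo.neg (hf : IsCentralEndo f) : IsCentralEndo (fun x => -(f x)) :=
  ⟨fun x y => by simp only [hf.1 x y, neg_add_of_inCenter (hf.2 x) (hf.2 y)],
    fun x => (hf.2 x).neg⟩

theorem IsCentralEndo.comp (hf : IsCentralEndo f) (hg : IsEndo g) : IsCentralEndo (f ∘ g) :=
  ⟨fun x y => by simp only [Function.comp_apply, hg x y, hf.1 (g x) (g y)],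
    fun x => hf.2 (g x)⟩

end CentralEndo

theorem central_endomorphisms_ops_general {Q : Type u} [DiassocLoop Q] (f g h : Q → Q)
    (hf : IsCentralEndo f) (hg : IsCentralEndo g) :
    IsCentralEndo (fun x : Q => f x + g x) ∧
    ((fun x : Q => f x + (g x + h x)) = (fun x : Q => (f x + g x) + h x)) ∧
    ((fun x : Q => f x + g x) = (fun x : Q => g x + f x)) ∧
    IsCentralEndo (fun _ : Q => (0 : Q)) ∧
    IsCentralEndo (fun x : Q => -(f x)) ∧
    ((fun x : Q => f x + -(f x)) = (fun _ : Q => (0 : Q))) ∧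
    ((fun x : Q => f x + (0 : Q)) = f) ∧
    IsCentralEndo (f ∘ g) :=
  ⟨hf.add hg,
    funext fun x => (((hf.2 x).1 (g x) (h x)).1).symm,
    funext fun x => (hf.2 x).add_comm (g x),
    isCentralEndo_zero,
    hf.neg,
    funext fun x => DiassocLoop.add_neg_cancel (f x),
    funext fun x => DiassocLoop.add_zero (f x),
    hf.comp hg.1⟩

theorem central_endomorphisms_ops {Q : Type u} [DiassocLoop Q] (f g h : Q → Q)
    (hf : IsCentralEndo f) (hg : IsCentralEndo g) (hh : IsCentralEndo h) :
    IsCentralEndo (fun x : Q => f x + g x) ∧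
    ((fun x : Q => f x + (g x + h x)) = (fun x : Q => (f x + g x) + h x)) ∧
    ((fun x : Q => f x + g x) = (fun x : Q => g x + f x)) ∧
    IsCentralEndo (fun _ : Q => (0 : Q)) ∧
    IsCentralEndo (fun x : Q => -(f x)) ∧
    ((fun x : Q => f x + -(f x)) = (fun _ : Q => (0 : Q))) ∧
    ((fun x : Q => f x + (0 : Q)) = f) ∧
    IsCentralEndo (f ∘ g) :=
  central_endomorphisms_ops_general f g h hf hg
end

section
/- Let (Q,+) be a diassociative loop and let f, g be endomorphisms of (Q,+). If f is m-quasicentral and g is n-quasicentral (for integers m, n), then the composition f∘g is (-mn)-quasicentral. In particular, the composition of two quasicentral endomorphisms of (Q,+) is quasicentral. -/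
/- Preamble: diassociative loops, written additively.
   A loop is a set with `+`, a neutral element `0`, and unique left/right
   solvability.  Diassociativity is stated as: the subloop generated by any
   two elements (closure under `+`, negation and both divisions) is
   associative; in particular every element has a two-sided inverse `-x`
   (included as part of the structure, as it is uniquely determined). -/

universe u

/-!
Put `h = n•x + g x` and `k = m•x + f x`; both are central. Then `f (g x) = -(n • f x) + f h`
and `n • f x = n•(-(m•x)) + n•k = -(mn)•x + n•k`: the two-generated subloops are groups, and
`k` commutes with `-(m•x)`. Hence `-(mn)•x + f (g x) = -(n•k) + f h`, which is central since
`f` maps the center into itself: `f z = -(m•z) + (m•z + f z)`.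
-/

namespace DiassocLoop

variable {Q : Type u} [DiassocLoop Q]

theorem neg_add_cancel_left (a b : Q) : -a + (a + b) = b := by
  rw [← diassoc a b _ _ _ (.neg _ .base_left) .base_left .base_right, DiassocLoop.neg_add_cancel,
    DiassocLoop.zero_add]

instance (a b : Q) : Add {y : Q // GenBy a b y} :=
  ⟨fun y z => ⟨y.1 + z.1, .add _ _ y.2 z.2⟩⟩

instance (a b : Q) : Zero {y : Q // GenBy a b y} := ⟨⟨0, .zero⟩⟩

instance (a b : Q) : Neg {y : Q // GenBy a b y} := ⟨fun y => ⟨-y.1, .neg _ y.2⟩⟩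

instance subloopAddGroup (a b : Q) : AddGroup {y : Q // GenBy a b y} where
  add_assoc y z w := Subtype.ext (diassoc a b _ _ _ y.2 z.2 w.2)
  zero_add y := Subtype.ext (DiassocLoop.zero_add y.1)
  add_zero y := Subtype.ext (DiassocLoop.add_zero y.1)
  nsmul := nsmulRec
  zsmul := zsmulRec
  neg_add_cancel y := Subtype.ext (DiassocLoop.neg_add_cancel y.1)

theorem subloop_coe_nsmul {a b : Q} (k : ℕ) (y : {y : Q // GenBy a b y}) :
    ((k • y : {y : Q // GenBy a b y}) : Q) = nsmulL k y.1 := by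
  induction k with
  | zero => rfl
  | succ k ih =>
    rw [succ_nsmul']
    exact congrArg (y.1 + ·) ih

theorem subloop_coe_zsmul {a b : Q} (p : ℤ) (y : {y : Q // GenBy a b y}) :
    ((p • y : {y : Q // GenBy a b y}) : Q) = zsmulL p y.1 := by
  cases p with
  | ofNat k => exact (congrArg Subtype.val (natCast_zsmul y k)).trans (subloop_coe_nsmul k y)
  | negSucc k =>
    rw [negSucc_zsmul]
    exact congrArg (-·) (subloop_coe_nsmul (k + 1) y)

theorem zsmulL_neg (p : ℤ) (x : Q) : zsmulL (-p) x = -zsmulL p x := by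
  let X : {y : Q // GenBy x x y} := ⟨x, .base_left⟩
  rw [← subloop_coe_zsmul (y := X), ← subloop_coe_zsmul (y := X), neg_zsmul]
  rfl

theorem zsmulL_zsmulL (p q : ℤ) (x : Q) : zsmulL q (zsmulL p x) = zsmulL (p * q) x := by
  let X : {y : Q // GenBy x x y} := ⟨x, .base_left⟩
  rw [← subloop_coe_zsmul (y := X), ← subloop_coe_zsmul (y := X), mul_zsmul']
  exact (subloop_coe_zsmul q (p • X)).symm

end DiassocLoop

namespace inNucleus

variable {Q : Type u} [Add Q] {z : Q}

theorem add_assoc_left (hz : inNucleus z) (x y : Q) : (z + x) + y = z + (x + y) := (hz x y).1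

theorem add_assoc_mid (hz : inNucleus z) (x y : Q) : (x + z) + y = x + (z + y) := (hz x y).2.1

theorem add_assoc_right (hz : inNucleus z) (x y : Q) : (x + y) + z = x + (y + z) := (hz x y).2.2

theorem inCenter_of_commute (hz : inNucleus z) (hc : ∀ x : Q, z + x = x + z) : inCenter z := by
  refine ⟨hz, fun u v => ?_⟩
  calc (z + z) + (u + v) = z + ((z + u) + v) := by rw [hz.add_assoc_left, hz.add_assoc_left]
    _ = (z + (u + z)) + v := by rw [← hz.add_assoc_left, hc u]
    _ = (z + u) + (z + v) := by rw [← hz.add_assoc_left, hz.add_assoc_mid]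

end inNucleus

namespace inCenter

variable {Q : Type u} [DiassocLoop Q] {y z : Q}

theorem add_comm_s2 (hz : inCenter z) (x : Q) : z + x = x + z := by
  have hm := hz.2 x 0
  rw [DiassocLoop.add_zero, DiassocLoop.add_zero, hz.1.add_assoc_left, hz.1.add_assoc_left] at hm
  exact DiassocLoop.add_left_cancel hm

theorem zero : inCenter (0 : Q) :=
  ⟨fun x y => by simp only [DiassocLoop.zero_add, DiassocLoop.add_zero, and_self],
    fun x y => by simp only [DiassocLoop.zero_add]⟩

theorem add_s2 (hy : inCenter y) (hz : inCenter z) : inCenter (y + z) := by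
  have ny := hy.1
  have nz := hz.1
  refine inNucleus.inCenter_of_commute (fun u v => ⟨?_, ?_, ?_⟩) (fun u => ?_)
  · rw [ny.add_assoc_left, ny.add_assoc_left, nz.add_assoc_left, ny.add_assoc_left]
  · rw [← nz.add_assoc_right, nz.add_assoc_mid, ny.add_assoc_mid, ny.add_assoc_left]
  · rw [← nz.add_assoc_right, ny.add_assoc_right, nz.add_assoc_right, nz.add_assoc_right]
  · rw [ny.add_assoc_left, hz.add_comm_s2, ← ny.add_assoc_left, hy.add_comm_s2, nz.add_assoc_right]

theorem neg_s2 (hz : inCenter z) : inCenter (-z) := by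
  have nz := hz.1
  have hc : ∀ x : Q, -z + x = x + -z := fun x => DiassocLoop.add_left_cancel (a := z) <| by
    rw [← nz.add_assoc_left, DiassocLoop.add_neg_cancel, DiassocLoop.zero_add,
      ← nz.add_assoc_left, hz.add_comm_s2, nz.add_assoc_mid, DiassocLoop.add_neg_cancel,
      DiassocLoop.add_zero]
  have hl : ∀ u v : Q, (-z + u) + v = -z + (u + v) := fun u v =>
    DiassocLoop.add_left_cancel (a := z) <| by
      rw [← nz.add_assoc_left, ← nz.add_assoc_left, ← nz.add_assoc_left,
        DiassocLoop.add_neg_cancel, DiassocLoop.zero_add, DiassocLoop.zero_add]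
  have hr : ∀ u v : Q, (u + v) + -z = u + (v + -z) := fun u v =>
    DiassocLoop.add_right_cancel (a := z) <| by
      rw [nz.add_assoc_right, nz.add_assoc_right, nz.add_assoc_right,
        DiassocLoop.neg_add_cancel, DiassocLoop.add_zero, DiassocLoop.add_zero]
  refine inNucleus.inCenter_of_commute (fun u v => ⟨hl u v, ?_, hr u v⟩) hc
  rw [← hc u, hl, hc (u + v), hr, hc v]

theorem nsmulL (hz : inCenter z) (k : ℕ) : inCenter (nsmulL k z) := by
  induction k with
  | zero => exact zero
  | succ k ih => exact hz.add_s2 ih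

theorem zsmulL (hz : inCenter z) (p : ℤ) : inCenter (zsmulL p z) := by
  cases p with
  | ofNat k => exact hz.nsmulL k
  | negSucc k => exact (hz.nsmulL (k + 1)).neg_s2

theorem addCommute_subloop (hz : inCenter z) (a : Q) :
    AddCommute (⟨a, .base_left⟩ : {y : Q // GenBy a z y}) ⟨z, .base_right⟩ :=
  Subtype.ext (hz.add_comm_s2 a).symm

theorem zsmulL_add (hz : inCenter z) (p : ℤ) (a : Q) :
    _root_.zsmulL p (a + z) = _root_.zsmulL p a + _root_.zsmulL p z := by
  have h := congrArg Subtype.val ((hz.addCommute_subloop a).zsmul_add p)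
  rw [DiassocLoop.subloop_coe_zsmul] at h
  exact h.trans (congrArg₂ (· + ·) (DiassocLoop.subloop_coe_zsmul p _)
    (DiassocLoop.subloop_coe_zsmul p _))

theorem neg_add (hz : inCenter z) (a : Q) : -(a + z) = -a + -z :=
  congrArg Subtype.val (hz.addCommute_subloop a).add_neg

end inCenter

section Endomorphisms

variable {Q : Type u} [DiassocLoop Q] {f : Q → Q}

theorem IsEndo.map_zero (hf : IsEndo f) : f 0 = 0 :=
  DiassocLoop.add_left_cancel (a := f 0) <| by
    rw [← hf, DiassocLoop.zero_add, DiassocLoop.add_zero]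

theorem IsEndo.map_neg (hf : IsEndo f) (a : Q) : f (-a) = -f a :=
  DiassocLoop.add_right_cancel (a := f a) <| by
    rw [← hf, DiassocLoop.neg_add_cancel, DiassocLoop.neg_add_cancel, hf.map_zero]

theorem IsEndo.map_nsmulL (hf : IsEndo f) (k : ℕ) (a : Q) : f (nsmulL k a) = nsmulL k (f a) := by
  induction k with
  | zero => exact hf.map_zero
  | succ k ih => exact (hf _ _).trans (congrArg (f a + ·) ih)

theorem IsEndo.map_zsmulL (hf : IsEndo f) (p : ℤ) (a : Q) : f (zsmulL p a) = zsmulL p (f a) := by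
  cases p with
  | ofNat k => exact hf.map_nsmulL k a
  | negSucc k => exact (hf.map_neg _).trans (congrArg (-·) (hf.map_nsmulL (k + 1) a))

theorem IsQuasicentral.inCenter_apply {m : ℤ} (hf : IsQuasicentral m f) {z : Q}
    (hz : inCenter z) : inCenter (f z) := by
  rw [← DiassocLoop.neg_add_cancel_left (zsmulL m z) (f z)]
  exact (hz.zsmulL m).neg_s2.add_s2 (hf.2 z)

theorem IsQuasicentral.zsmulL_apply {m : ℤ} (hf : IsQuasicentral m f) (n : ℤ) (x : Q) :
    zsmulL n (f x) = zsmulL (-(m * n)) x + zsmulL n (zsmulL m x + f x) :=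
  calc zsmulL n (f x) = zsmulL n (-zsmulL m x + (zsmulL m x + f x)) := by
        rw [DiassocLoop.neg_add_cancel_left]
    _ = zsmulL n (-zsmulL m x) + zsmulL n (zsmulL m x + f x) := (hf.2 x).zsmulL_add n _
    _ = zsmulL (-(m * n)) x + zsmulL n (zsmulL m x + f x) := by
        rw [← DiassocLoop.zsmulL_neg, DiassocLoop.zsmulL_zsmulL, neg_mul]

theorem IsQuasicentral.comp {m n : ℤ} {g : Q → Q} (hf : IsQuasicentral m f)
    (hg : IsQuasicentral n g) : IsQuasicentral (-(m * n)) (f ∘ g) := by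
  refine ⟨fun u v => (congrArg f (hg.1 u v)).trans (hf.1 _ _), fun x => ?_⟩
  set k := zsmulL m x + f x
  set h := zsmulL n x + g x
  have hfh : inCenter (f h) := hf.inCenter_apply (hg.2 x)
  have hnk : inCenter (zsmulL n k) := (hf.2 x).zsmulL n
  have hfg : f (g x) = zsmulL (m * n) x + (-zsmulL n k + f h) :=
    calc f (g x) = f (-zsmulL n x + h) := by rw [DiassocLoop.neg_add_cancel_left]
      _ = -zsmulL n (f x) + f h := by rw [hf.1, hf.1.map_neg, hf.1.map_zsmulL]
      _ = (zsmulL (m * n) x + -zsmulL n k) + f h := by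
          rw [hf.zsmulL_apply, hnk.neg_add, ← DiassocLoop.zsmulL_neg, neg_neg]
      _ = zsmulL (m * n) x + (-zsmulL n k + f h) := hfh.1.add_assoc_right _ _
  show inCenter (zsmulL (-(m * n)) x + f (g x))
  rw [hfg, DiassocLoop.zsmulL_neg, DiassocLoop.neg_add_cancel_left]
  exact hnk.neg_s2.add_s2 hfh

end Endomorphisms

theorem quasicentral_comp {Q : Type u} [DiassocLoop Q] :
    (∀ (m n : ℤ) (f g : Q → Q), IsQuasicentral m f → IsQuasicentral n g →
      IsQuasicentral (-(m * n)) (f ∘ g)) ∧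
    (∀ f g : Q → Q, (∃ m : ℤ, IsQuasicentral m f) → (∃ n : ℤ, IsQuasicentral n g) →
      ∃ k : ℤ, IsQuasicentral k (f ∘ g)) :=
  ⟨fun _ _ _ _ hf hg => hf.comp hg, fun _ _ ⟨_, hf⟩ ⟨_, hg⟩ => ⟨_, hf.comp hg⟩⟩
end

section
/- Let (Q,+) be a commutative diassociative loop and let f, g be endomorphisms of (Q,+), with f m-quasicentral and g n-quasicentral (for integers m, n). Then: (1) -f is a (-m)-quasicentral endomorphism of (Q,+); (2) the pointwise sum f + g is an endomorphism of (Q,+) and is (m+n)-quasicentral. In particular, if f and g are quasicentral endomorphisms, then so are -f and f + g. -/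
/- Preamble: diassociative loops, written additively.
   A loop is a set with `+`, a neutral element `0`, and unique left/right
   solvability.  Diassociativity is stated as: the subloop generated by any
   two elements (closure under `+`, negation and both divisions) is
   associative; in particular every element has a two-sided inverse `-x`
   (included as part of the structure, as it is uniquely determined). -/

universe u

/- In a commutative loop the center is the set of elements `a` satisfying the
   nucleus (associativity) conditions, i.e. `inNucleus a`.  Quasicentrality
   for commutative loops is stated accordingly. -/

/-- `f` is an `m`-quasicentral endomorphism of the commutative loop `(Q,+)`:
    `m•x + f(x)` lies in the center for all `x`. -/
def IsQuasicentralC {Q : Type u} [Add Q] [Zero Q] [Neg Q] (m : ℤ) (f : Q → Q) : Prop :=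
  IsEndo f ∧ ∀ x : Q, inNucleus (zsmulL m x + f x)

section Aux
variable {Q : Type u} [DiassocLoop Q]

theorem ql_add_left_cancel {a b c : Q} (h : a + b = a + c) : b = c := by
  obtain ⟨x, -, hu⟩ := DiassocLoop.exu_left a (a + c)
  exact (hu b h).trans (hu c rfl).symm

theorem ql_add_right_cancel {a b c : Q} (h : b + a = c + a) : b = c := by
  obtain ⟨x, -, hu⟩ := DiassocLoop.exu_right a (c + a)
  exact (hu b h).trans (hu c rfl).symm

/-- The subloop generated by `a` and `b`, as a subtype. -/
abbrev SubL (a b : Q) : Type u := {z : Q // GenBy a b z}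

instance (a b : Q) : Zero (SubL a b) := ⟨⟨0, GenBy.zero⟩⟩
instance (a b : Q) : Add (SubL a b) := ⟨fun p q => ⟨p.1 + q.1, GenBy.add _ _ p.2 q.2⟩⟩
instance (a b : Q) : Neg (SubL a b) := ⟨fun p => ⟨-p.1, GenBy.neg _ p.2⟩⟩

/-- In a commutative diassociative loop, the subloop generated by two
    elements is an abelian group. -/
def subGroup (hcomm : ∀ x y : Q, x + y = y + x) (a b : Q) :
    AddCommGroup (SubL a b) where
  add := (· + ·)
  zero := 0
  neg := (- ·)
  add_assoc p q r := Subtype.ext (DiassocLoop.diassoc a b _ _ _ p.2 q.2 r.2)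
  zero_add p := Subtype.ext (DiassocLoop.zero_add p.1)
  add_zero p := Subtype.ext (DiassocLoop.add_zero p.1)
  neg_add_cancel p := Subtype.ext (DiassocLoop.neg_add_cancel p.1)
  add_comm p q := Subtype.ext (hcomm p.1 q.1)
  nsmul := nsmulRec
  zsmul := zsmulRec

theorem ql_neg_add (hcomm : ∀ x y : Q, x + y = y + x) (u v : Q) :
    -(u + v) = -u + -v := by
  letI := subGroup hcomm u v
  exact congrArg Subtype.val
    (neg_add (⟨u, GenBy.base_left⟩ : SubL u v) ⟨v, GenBy.base_right⟩)

theorem nsmulL_genBy {a b u : Q} (h : GenBy a b u) (n : ℕ) :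
    GenBy a b (nsmulL n u) := by
  induction n with
  | zero => exact GenBy.zero
  | succ k ih => exact GenBy.add _ _ h ih

theorem zsmulL_genBy {a b u : Q} (h : GenBy a b u) (m : ℤ) :
    GenBy a b (zsmulL m u) := by
  cases m with
  | ofNat n => exact nsmulL_genBy h n
  | negSucc n => exact GenBy.neg _ (nsmulL_genBy h (n + 1))

theorem ql_zsmul_facts (hcomm : ∀ x y : Q, x + y = y + x) (x : Q) :
    (∀ m : ℤ, zsmulL (-m) x = -(zsmulL m x)) ∧
    (∀ m n : ℤ, zsmulL (m + n) x + (-(zsmulL m x) + -(zsmulL n x)) = 0) := by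
  letI := subGroup hcomm x x
  set p : SubL x x := ⟨x, GenBy.base_left⟩ with hp
  have hn : ∀ k : ℕ, ((k • p : SubL x x)).1 = nsmulL k x := by
    intro k
    induction k with
    | zero => rw [zero_nsmul]; rfl
    | succ j ih =>
        rw [succ_nsmul]
        show (j • p).1 + x = x + nsmulL j x
        rw [ih, hcomm]
  have hz : ∀ k : ℤ, ((k • p : SubL x x)).1 = zsmulL k x := by
    intro k
    cases k with
    | ofNat j => rw [Int.ofNat_eq_natCast, natCast_zsmul]; exact hn j
    | negSucc j =>
        rw [negSucc_zsmul]
        show -(((j + 1) • p : SubL x x)).1 = _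
        rw [hn]
        rfl
  constructor
  · intro m
    calc zsmulL (-m) x = ((-m) • p : SubL x x).1 := (hz _).symm
      _ = (-(m • p) : SubL x x).1 := congrArg Subtype.val (neg_zsmul p m)
      _ = -((m • p : SubL x x)).1 := rfl
      _ = -(zsmulL m x) := by rw [hz]
  · intro m n
    have key : ((m + n) • p : SubL x x) + (-(m • p) + -(n • p)) = 0 := by
      rw [add_zsmul]; abel
    have key' : (((m + n) • p : SubL x x)).1 +
        (-(((m • p : SubL x x)).1) + -(((n • p : SubL x x)).1)) = (0 : Q) :=
      congrArg Subtype.val key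
    rw [hz, hz, hz] at key'
    exact key'

theorem ql_four (hcomm : ∀ x y : Q, x + y = y + x) (x y p q r s : Q)
    (hp : GenBy x y p) (hq : GenBy x y q) (hr : GenBy x y r) (hs : GenBy x y s) :
    (p + q) + (r + s) = (p + r) + (q + s) := by
  letI := subGroup hcomm x y
  exact congrArg Subtype.val
    (add_add_add_comm (⟨p, hp⟩ : SubL x y) ⟨q, hq⟩ ⟨r, hr⟩ ⟨s, hs⟩)

theorem nuc_add {a b : Q} (ha : inNucleus a) (hb : inNucleus b) :
    inNucleus (a + b) := by
  intro x y
  refine ⟨?_, ?_, ?_⟩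
  · rw [(ha b x).1, (ha (b + x) y).1, (hb x y).1, ← (ha b (x + y)).1]
  · rw [← (ha x b).2.1, (hb (x + a) y).2.1, (ha x (b + y)).2.1, ← (ha b y).1]
  · rw [← (hb (x + y) a).2.2, (ha x y).2.2, (hb x (y + a)).2.2, (hb y a).2.2]

theorem nuc_neg {a : Q} (ha : inNucleus a) : inNucleus (-a) := by
  intro x y
  have haa : a + -a = (0 : Q) := DiassocLoop.add_neg_cancel a
  refine ⟨?_, ?_, ?_⟩
  · apply ql_add_left_cancel (a := a)
    have l : a + ((-a + x) + y) = x + y := by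
      rw [← (ha (-a + x) y).1, ← (ha (-a) x).1, haa, DiassocLoop.zero_add]
    have r : a + (-a + (x + y)) = x + y := by
      rw [← (ha (-a) (x + y)).1, haa, DiassocLoop.zero_add]
    rw [l, r]
  · have hu : (x + -a) + a = x := by
      rw [(ha x (-a)).2.2, DiassocLoop.neg_add_cancel, DiassocLoop.add_zero]
    calc (x + -a) + y = (x + -a) + ((a + -a) + y) := by
          rw [haa, DiassocLoop.zero_add]
      _ = (x + -a) + (a + (-a + y)) := by rw [(ha (-a) y).1]
      _ = ((x + -a) + a) + (-a + y) := ((ha (x + -a) (-a + y)).2.1).symm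
      _ = x + (-a + y) := by rw [hu]
  · apply ql_add_right_cancel (a := a)
    have l : ((x + y) + -a) + a = x + y := by
      rw [(ha (x + y) (-a)).2.2, DiassocLoop.neg_add_cancel, DiassocLoop.add_zero]
    have r : (x + (y + -a)) + a = x + y := by
      rw [(ha x (y + -a)).2.2, (ha y (-a)).2.2, DiassocLoop.neg_add_cancel,
        DiassocLoop.add_zero]
    rw [l, r]

theorem nuc_shuffle (hcomm : ∀ x y : Q, x + y = y + x) {p q : Q}
    (hp : inNucleus p) (hq : inNucleus q) (u v : Q) :
    (u + p) + (v + q) = (u + v) + (p + q) := by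
  calc (u + p) + (v + q) = u + (p + (v + q)) := (hp u (v + q)).2.1
    _ = u + ((p + v) + q) := by rw [(hp v q).1]
    _ = u + ((v + p) + q) := by rw [hcomm p v]
    _ = u + (v + (p + q)) := by rw [(hp v q).2.1]
    _ = (u + v) + (p + q) := ((nuc_add hp hq) u v).2.2.symm

theorem ql_eq_neg_add {w z a : Q} (ha : inNucleus a) (h : w + z = a) :
    z = -w + a := by
  apply ql_add_left_cancel (a := w)
  rw [h, ← (ha w (-w)).2.2, DiassocLoop.add_neg_cancel, DiassocLoop.zero_add]

end Aux

/- STATEMENT 3: Lemma 2.5.  In a commutative diassociative loop, if `f` is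
   `m`-quasicentral and `g` is `n`-quasicentral, then `-f` is
   `(-m)`-quasicentral and `f + g` is an `(m+n)`-quasicentral endomorphism;
   in particular negations and sums of quasicentral endomorphisms are
   quasicentral. -/
theorem quasicentral_neg_add {Q : Type u} [DiassocLoop Q]
    (hcomm : ∀ x y : Q, x + y = y + x) :
    (∀ (m n : ℤ) (f g : Q → Q), IsQuasicentralC m f → IsQuasicentralC n g →
      IsQuasicentralC (-m) (fun x : Q => -(f x)) ∧
      IsQuasicentralC (m + n) (fun x : Q => f x + g x)) ∧
    (∀ f g : Q → Q, (∃ m : ℤ, IsQuasicentralC m f) → (∃ n : ℤ, IsQuasicentralC n g) →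
      (∃ k : ℤ, IsQuasicentralC k (fun x : Q => -(f x))) ∧
      (∃ k : ℤ, IsQuasicentralC k (fun x : Q => f x + g x))) := by
  have main : ∀ (m n : ℤ) (f g : Q → Q), IsQuasicentralC m f → IsQuasicentralC n g →
      IsQuasicentralC (-m) (fun x : Q => -(f x)) ∧
      IsQuasicentralC (m + n) (fun x : Q => f x + g x) := by
    intro m n f g hf hg
    obtain ⟨hfE, hfC⟩ := hf
    obtain ⟨hgE, hgC⟩ := hg
    have hfd : ∀ x : Q, f x = -(zsmulL m x) + (zsmulL m x + f x) := fun x =>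
      ql_eq_neg_add (hfC x) rfl
    have hgd : ∀ x : Q, g x = -(zsmulL n x) + (zsmulL n x + g x) := fun x =>
      ql_eq_neg_add (hgC x) rfl
    constructor
    · constructor
      · intro x y
        show -(f (x + y)) = -(f x) + -(f y)
        rw [hfE x y]
        exact ql_neg_add hcomm (f x) (f y)
      · intro x
        show inNucleus (zsmulL (-m) x + -(f x))
        have h1 : zsmulL (-m) x = -(zsmulL m x) := (ql_zsmul_facts hcomm x).1 m
        have h2 : -(zsmulL m x) + -(f x) = -(zsmulL m x + f x) :=
          (ql_neg_add hcomm _ _).symm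
        rw [h1, h2]
        exact nuc_neg (hfC x)
    · constructor
      · intro x y
        show f (x + y) + g (x + y) = (f x + g x) + (f y + g y)
        rw [hfE x y, hgE x y]
        rw [hfd x, hfd y, hgd x, hgd y]
        rw [nuc_shuffle hcomm (hfC x) (hfC y) (-(zsmulL m x)) (-(zsmulL m y))]
        rw [nuc_shuffle hcomm (hgC x) (hgC y) (-(zsmulL n x)) (-(zsmulL n y))]
        rw [nuc_shuffle hcomm (nuc_add (hfC x) (hfC y)) (nuc_add (hgC x) (hgC y))
          (-(zsmulL m x) + -(zsmulL m y)) (-(zsmulL n x) + -(zsmulL n y))]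
        rw [nuc_shuffle hcomm (hfC x) (hgC x) (-(zsmulL m x)) (-(zsmulL n x))]
        rw [nuc_shuffle hcomm (hfC y) (hgC y) (-(zsmulL m y)) (-(zsmulL n y))]
        rw [nuc_shuffle hcomm (nuc_add (hfC x) (hgC x)) (nuc_add (hfC y) (hgC y))
          (-(zsmulL m x) + -(zsmulL n x)) (-(zsmulL m y) + -(zsmulL n y))]
        rw [ql_four hcomm x y (-(zsmulL m x)) (-(zsmulL m y)) (-(zsmulL n x))
          (-(zsmulL n y))
          (GenBy.neg _ (zsmulL_genBy GenBy.base_left m))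
          (GenBy.neg _ (zsmulL_genBy GenBy.base_right m))
          (GenBy.neg _ (zsmulL_genBy GenBy.base_left n))
          (GenBy.neg _ (zsmulL_genBy GenBy.base_right n))]
        rw [nuc_shuffle hcomm (hfC y) (hgC y) (zsmulL m x + f x) (zsmulL n x + g x)]
      · intro x
        show inNucleus (zsmulL (m + n) x + (f x + g x))
        have hd : f x + g x =
            (-(zsmulL m x) + -(zsmulL n x)) + ((zsmulL m x + f x) + (zsmulL n x + g x)) := by
          conv_lhs => rw [hfd x, hgd x]
          exact nuc_shuffle hcomm (hfC x) (hgC x) _ _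
        have step : zsmulL (m + n) x +
              ((-(zsmulL m x) + -(zsmulL n x)) + ((zsmulL m x + f x) + (zsmulL n x + g x))) =
            (zsmulL (m + n) x + (-(zsmulL m x) + -(zsmulL n x))) +
              ((zsmulL m x + f x) + (zsmulL n x + g x)) :=
          ((nuc_add (hfC x) (hgC x)) (zsmulL (m + n) x) (-(zsmulL m x) + -(zsmulL n x))).2.2.symm
        have hzero : zsmulL (m + n) x + (-(zsmulL m x) + -(zsmulL n x)) = 0 :=
          (ql_zsmul_facts hcomm x).2 m n
        rw [hd, step, hzero, DiassocLoop.zero_add]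
        exact nuc_add (hfC x) (hgC x)
  refine ⟨main, ?_⟩
  rintro f g ⟨m, hf⟩ ⟨n, hg⟩
  exact ⟨⟨-m, (main m n f g hf hg).1⟩, ⟨m + n, (main m n f g hf hg).2⟩⟩
end

section
/- Let (Q,+) be a commutative diassociative loop and let f, g, h be quasicentral endomorphisms of (Q,+). Then: (1) f + g = g + f; (2) f + (g + h) = (f + g) + h; (3) f + (-f) = 0; and (4) f + 0 = f, where addition and negation of endomorphisms are pointwise and 0 is the zero endomorphism. -/
/- Preamble: diassociative loops, written additively.
   A loop is a set with `+`, a neutral element `0`, and unique left/right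
   solvability.  Diassociativity is stated as: the subloop generated by any
   two elements (closure under `+`, negation and both divisions) is
   associative; in particular every element has a two-sided inverse `-x`
   (included as part of the structure, as it is uniquely determined). -/

universe u

section Aux
variable {Q : Type u} [DiassocLoop Q]

lemma genBy_nsmulL (x : Q) : ∀ n : ℕ, GenBy x x (nsmulL n x)
  | 0 => GenBy.zero
  | n + 1 => GenBy.add _ _ GenBy.base_left (genBy_nsmulL x n)

lemma genBy_zsmulL (x : Q) (m : ℤ) : GenBy x x (zsmulL m x) := by
  cases m with
  | ofNat n => exact genBy_nsmulL x n
  | negSucc n => exact GenBy.neg _ (genBy_nsmulL x (n + 1))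

lemma nucleus_add {z w : Q} (hz : inNucleus z) (hw : inNucleus w) :
    inNucleus (z + w) := by
  intro x y
  refine ⟨?_, ?_, ?_⟩
  · calc ((z + w) + x) + y = (z + (w + x)) + y := by rw [(hz w x).1]
      _ = z + ((w + x) + y) := (hz (w + x) y).1
      _ = z + (w + (x + y)) := by rw [(hw x y).1]
      _ = (z + w) + (x + y) := ((hz w (x + y)).1).symm
  · calc (x + (z + w)) + y = ((x + z) + w) + y := by rw [(hw x z).2.2]
      _ = (x + z) + (w + y) := (hw (x + z) y).2.1
      _ = x + (z + (w + y)) := (hz x (w + y)).2.1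
      _ = x + ((z + w) + y) := by rw [(hz w y).1]
  · calc (x + y) + (z + w) = ((x + y) + z) + w := by rw [(hw (x + y) z).2.2]
      _ = (x + (y + z)) + w := by rw [(hz x y).2.2]
      _ = x + ((y + z) + w) := (hw x (y + z)).2.2
      _ = x + (y + (z + w)) := by rw [(hw y z).2.2]

/-- Pull a nucleus element out of the middle (needs commutativity). -/
lemma swap_nucleus (hcomm : ∀ x y : Q, x + y = y + x) {z : Q}
    (hz : inNucleus z) (u v : Q) : (u + z) + v = (u + v) + z := by
  calc (u + z) + v = u + (z + v) := (hz u v).2.1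
    _ = u + (v + z) := by rw [hcomm z v]
    _ = (u + v) + z := ((hz u v).2.2).symm

lemma combine (hcomm : ∀ x y : Q, x + y = y + x) {z w : Q}
    (hz : inNucleus z) (hw : inNucleus w) (a b : Q) :
    (a + z) + (b + w) = (a + b) + (z + w) := by
  calc (a + z) + (b + w) = ((a + z) + b) + w := ((hw (a + z) b).2.2).symm
    _ = ((a + b) + z) + w := by rw [swap_nucleus hcomm hz a b]
    _ = (a + b) + (z + w) := (hw (a + b) z).2.2

lemma key_assoc (hcomm : ∀ x y : Q, x + y = y + x) {x a b c z₁ z₂ z₃ : Q}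
    (ha : GenBy x x a) (hb : GenBy x x b) (hc : GenBy x x c)
    (h1 : inNucleus z₁) (h2 : inNucleus z₂) (h3 : inNucleus z₃) :
    ((a + z₁) + (b + z₂)) + (c + z₃) = (a + z₁) + ((b + z₂) + (c + z₃)) := by
  calc ((a + z₁) + (b + z₂)) + (c + z₃)
      = ((a + b) + (z₁ + z₂)) + (c + z₃) := by rw [combine hcomm h1 h2]
    _ = ((a + b) + c) + ((z₁ + z₂) + z₃) := combine hcomm (nucleus_add h1 h2) h3 _ _
    _ = (a + (b + c)) + ((z₁ + z₂) + z₃) := by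
        rw [DiassocLoop.diassoc x x a b c ha hb hc]
    _ = (a + (b + c)) + (z₁ + (z₂ + z₃)) := by rw [(h3 z₁ z₂).2.2]
    _ = (a + z₁) + ((b + c) + (z₂ + z₃)) := (combine hcomm h1 (nucleus_add h2 h3) _ _).symm
    _ = (a + z₁) + ((b + z₂) + (c + z₃)) := by rw [combine hcomm h2 h3]

/-- If `a + t` is in the nucleus then `t = -a + (a + t)`. -/
lemma decomp {a t : Q} (hz : inNucleus (a + t)) : t = -a + (a + t) := by
  obtain ⟨s, hs, huniq⟩ := DiassocLoop.exu_left a (a + t)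
  have h1 : a + (-a + (a + t)) = a + t := by
    calc a + (-a + (a + t)) = (a + -a) + (a + t) := ((hz a (-a)).2.2).symm
      _ = 0 + (a + t) := by rw [DiassocLoop.add_neg_cancel]
      _ = a + t := DiassocLoop.zero_add _
  have h2 := huniq t rfl
  have h3 := huniq (-a + (a + t)) h1
  exact h2.trans h3.symm

end Aux

/- STATEMENT 4: Lemma 2.6.  For quasicentral endomorphisms `f, g, h` of a
   commutative diassociative loop `(Q,+)`:
   (1) `f + g = g + f`, (2) `f + (g + h) = (f + g) + h`,
   (3) `f + (-f) = 0`, and (4) `f + 0 = f`. -/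
theorem quasicentral_add_props {Q : Type u} [DiassocLoop Q]
    (hcomm : ∀ x y : Q, x + y = y + x) (f g h : Q → Q)
    (hf : ∃ m : ℤ, IsQuasicentralC m f) (hg : ∃ n : ℤ, IsQuasicentralC n g)
    (hh : ∃ k : ℤ, IsQuasicentralC k h) :
    ((fun x : Q => f x + g x) = (fun x : Q => g x + f x)) ∧
    ((fun x : Q => f x + (g x + h x)) = (fun x : Q => (f x + g x) + h x)) ∧
    ((fun x : Q => f x + -(f x)) = (fun _ : Q => (0 : Q))) ∧
    ((fun x : Q => f x + (0 : Q)) = f) := by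
  obtain ⟨m, _, hfZ⟩ := hf
  obtain ⟨n, _, hgZ⟩ := hg
  obtain ⟨k, _, hhZ⟩ := hh
  refine ⟨funext fun x => hcomm _ _, funext fun x => ?_,
    funext fun x => DiassocLoop.add_neg_cancel _,
    funext fun x => DiassocLoop.add_zero _⟩
  have df : f x = -(zsmulL m x) + (zsmulL m x + f x) := decomp (hfZ x)
  have dg : g x = -(zsmulL n x) + (zsmulL n x + g x) := decomp (hgZ x)
  have dh : h x = -(zsmulL k x) + (zsmulL k x + h x) := decomp (hhZ x)
  rw [df, dg, dh]
  exact (key_assoc hcomm (GenBy.neg _ (genBy_zsmulL x m))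
    (GenBy.neg _ (genBy_zsmulL x n)) (GenBy.neg _ (genBy_zsmulL x k))
    (hfZ x) (hgZ x) (hhZ x)).symm
end
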